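/- Let a 1.5-way guess-tape automaton be given (finite state type Q, guess alphabet Δ, transition function δ : Q → Δ → Q × Move with Move = {stay, right, return}, accepting set A ⊆ Q), let τ : ℕ → Δ be a guess, and consider the run (qₙ, pₙ) started at (q₀, 0). Suppose the run first reaches an accepting state at time T, i.e. q_T ∈ A and qₙ ∉ A for all n < T. Then the number of steps n < T at which the return command is taken (i.e. at which the move component of δ qₙ (τ pₙ) is return) is at most Fintype.card Q. (The paper's Lemma: any accepting computation of a 1.5-way automaton includes no more than #Q moves to the initial cell, since after each return the automaton deterministically rescans the same tape content, so a repeated post-return state would force a loop.) -/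

import Mathlib

/-!
A run is deterministic, so once a configuration recurs before the first visit to `A`, the run
is periodic from then on and its configuration at time `T` already occurred earlier, contradicting
minimality of `T`. Hence configurations up to time `T` are pairwise distinct. Every return lands
on cell `0`, so the states reached by the returns are pairwise distinct as well, and there are at
most `Fintype.card Q` of them.
-/

/-- Move commands of a 1.5-way guess-tape automaton: stay in place, step right,
or return to the initial cell. -/
inductive Move15 where
  | stay : Move15
  | right : Move15
  | ret : Move15
deriving DecidableEq

/-- One step of a 1.5-way guess-tape automaton with transition function `δ`
on guess tape `τ`: a configuration is a pair (state, position). -/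
def step15 {Q Δ : Type*} (δ : Q → Δ → Q × Move15) (τ : ℕ → Δ) :
    Q × ℕ → Q × ℕ :=
  fun c =>
    let r := δ c.1 (τ c.2)
    match r.2 with
    | .stay => (r.1, c.2)
    | .right => (r.1, c.2 + 1)
    | .ret => (r.1, 0)

/-- The `n`-th configuration of the run started at state `q₀` on cell `0`. -/
def run15 {Q Δ : Type*} (δ : Q → Δ → Q × Move15) (τ : ℕ → Δ) (q₀ : Q) (n : ℕ) :
    Q × ℕ :=
  (step15 δ τ)^[n] (q₀, 0)

theorem Function.injOn_iterate_Iic_of_first_hit {α : Type*} {f : α → α} {x : α}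
    {P : α → Prop} {T : ℕ} (hT : P (f^[T] x)) (hfirst : ∀ n < T, ¬ P (f^[n] x)) :
    Set.InjOn (fun n => f^[n] x) (Set.Iic T) := by
  have key : ∀ i j, i < j → j ≤ T → f^[i] x ≠ f^[j] x := by
    intro i j hij hjT heq
    have hperiod : f^[T] x = f^[T - j + i] x := by
      rw [Function.iterate_add_apply, heq, ← Function.iterate_add_apply, Nat.sub_add_cancel hjT]
    exact hfirst (T - j + i) (by omega) (hperiod ▸ hT)
  intro i hi j hj hij
  rcases lt_trichotomy i j with h | h | h
  · exact absurd hij (key i j h hj)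
  · exact h
  · exact absurd hij.symm (key j i h hi)

theorem run15_snd_succ_of_ret {Q Δ : Type*} {δ : Q → Δ → Q × Move15} {τ : ℕ → Δ} {q₀ : Q}
    {n : ℕ} (h : (δ (run15 δ τ q₀ n).1 (τ (run15 δ τ q₀ n).2)).2 = Move15.ret) :
    (run15 δ τ q₀ (n + 1)).2 = 0 := by
  rw [run15, Function.iterate_succ_apply', ← run15]
  simp only [step15, h]

theorem stmt_9 {Q Δ : Type*} [Fintype Q] (δ : Q → Δ → Q × Move15) (A : Set Q)
    (τ : ℕ → Δ) (q₀ : Q) (T : ℕ)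
    (hacc : (run15 δ τ q₀ T).1 ∈ A)
    (hfirst : ∀ n < T, (run15 δ τ q₀ n).1 ∉ A) :
    ((Finset.range T).filter
        (fun n => (δ (run15 δ τ q₀ n).1 (τ (run15 δ τ q₀ n).2)).2 = Move15.ret)).card
      ≤ Fintype.card Q := by
  have hconfig : Set.InjOn (run15 δ τ q₀) (Set.Iic T) :=
    Function.injOn_iterate_Iic_of_first_hit (P := fun c => c.1 ∈ A) hacc hfirst
  have hstate : Set.InjOn (fun n => (run15 δ τ q₀ (n + 1)).1)
      ((Finset.range T).filter
        (fun n => (δ (run15 δ τ q₀ n).1 (τ (run15 δ τ q₀ n).2)).2 = Move15.ret)) := by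
    intro n hn m hm hnm
    simp only [Finset.coe_filter, Finset.mem_range, Set.mem_ofPred_eq] at hn hm
    have hpos : (run15 δ τ q₀ (n + 1)).2 = (run15 δ τ q₀ (m + 1)).2 := by
      rw [run15_snd_succ_of_ret hn.2, run15_snd_succ_of_ret hm.2]
    have := hconfig (Set.mem_Iic.2 (by omega)) (Set.mem_Iic.2 (by omega)) (Prod.ext hnm hpos)
    omega
  calc _ ≤ (Finset.univ : Finset Q).card :=
        Finset.card_le_card_of_injOn _ (fun _ _ => Finset.mem_univ _) hstate
    _ = Fintype.card Q := Finset.card_univ
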